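/- arXiv:2012.04951 — 5 statements merged into one kernel-verified Lean document; each statement's English description precedes it below -/
import Mathlib

section
/- Let V be an r×r real symmetric positive definite matrix and let ‖V‖ denote its operator norm. Then for every vector v ∈ ℝ^r, ‖Vv‖/(1 + vᵀVv) ≤ √‖V‖/2. -/
/-!
For a positive operator `T`, evaluating `⟪y, T y⟫ ≥ 0` at `y = ‖T‖ x - T x` and bounding
`⟪T x, T (T x)⟫ ≤ ‖T‖ ‖T x‖²` yields `‖T x‖² ≤ ‖T‖ ⟪x, T x⟫`. Hence
`‖T x‖ ≤ √‖T‖ √a` with `a = ⟪x, T x⟫`, and AM–GM `2 √a ≤ 1 + a` finishes.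
-/

open scoped InnerProductSpace
open RCLike

theorem Real.two_mul_sqrt_le_one_add {a : ℝ} (ha : 0 ≤ a) : 2 * √a ≤ 1 + a := by
  simpa [Real.sq_sqrt ha, add_comm] using two_mul_le_add_sq (√a) 1

namespace ContinuousLinearMap

variable {𝕜 E : Type*} [RCLike 𝕜] [NormedAddCommGroup E] [InnerProductSpace 𝕜 E]

theorem IsPositive.norm_apply_sq_le {T : E →L[𝕜] E} (hT : T.IsPositive) (x : E) :
    ‖T x‖ ^ 2 ≤ ‖T‖ * re ⟪x, T x⟫_𝕜 := by
  set c := ‖T‖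
  have hTTx : re ⟪T x, T (T x)⟫_𝕜 ≤ c * ‖T x‖ ^ 2 :=
    calc re ⟪T x, T (T x)⟫_𝕜 ≤ ‖T x‖ * ‖T (T x)‖ := re_inner_le_norm _ _
      _ ≤ ‖T x‖ * (c * ‖T x‖) := by gcongr; exact T.le_opNorm _
      _ = c * ‖T x‖ ^ 2 := by ring
  have hexpand : re ⟪(c : 𝕜) • x - T x, T ((c : 𝕜) • x - T x)⟫_𝕜 =
      c ^ 2 * re ⟪x, T x⟫_𝕜 - 2 * c * ‖T x‖ ^ 2 + re ⟪T x, T (T x)⟫_𝕜 := by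
    simp only [map_sub, map_smul, inner_sub_left, inner_sub_right, inner_smul_left,
      inner_smul_right, ← hT.inner_left_eq_inner_right x (T x), inner_self_eq_norm_sq_to_K,
      conj_ofReal, mul_sub, re_ofReal_mul, ← ofReal_pow, ofReal_re]
    ring
  have hnonneg : 0 ≤ c * (c * re ⟪x, T x⟫_𝕜 - ‖T x‖ ^ 2) := by
    nlinarith [hT.re_inner_nonneg_right ((c : 𝕜) • x - T x)]
  rcases (norm_nonneg T).eq_or_lt with hc_zero | hc_pos
  · simp [norm_eq_zero.mp hc_zero.symm]
  · nlinarith [nonneg_of_mul_nonneg_right hnonneg hc_pos]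

theorem IsPositive.norm_apply_div_one_add_le {T : E →L[𝕜] E} (hT : T.IsPositive) (x : E) :
    ‖T x‖ / (1 + re ⟪x, T x⟫_𝕜) ≤ √‖T‖ / 2 := by
  set a := re ⟪x, T x⟫_𝕜
  have ha : 0 ≤ a := hT.re_inner_nonneg_right x
  have hTx : ‖T x‖ ≤ √‖T‖ * √a := by
    rw [← Real.sqrt_mul (norm_nonneg T)]
    exact Real.le_sqrt_of_sq_le (hT.norm_apply_sq_le x)
  rw [div_le_div_iff₀ (by positivity) two_pos]
  calc ‖T x‖ * 2 ≤ √‖T‖ * (2 * √a) := by nlinarith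
    _ ≤ √‖T‖ * (1 + a) := by gcongr; exact Real.two_mul_sqrt_le_one_add ha

end ContinuousLinearMap

open scoped RealInnerProductSpace

/-- Let `V` be an `r × r` real symmetric positive definite matrix and
`‖·‖` the operator norm (via the action on Euclidean space).  Then for every vector
`v ∈ ℝ^r`, `‖V v‖ / (1 + vᵀ V v) ≤ √‖V‖ / 2`. -/
theorem phi_bound {r : ℕ} (V : Matrix (Fin r) (Fin r) ℝ) (hV : V.PosDef)
    (v : EuclideanSpace ℝ (Fin r)) :
    ‖(Matrix.toEuclideanCLM (𝕜 := ℝ) V) v‖ /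
        (1 + ⟪v, (Matrix.toEuclideanCLM (𝕜 := ℝ) V) v⟫) ≤
      Real.sqrt ‖Matrix.toEuclideanCLM (𝕜 := ℝ) V‖ / 2 := by
  have hT : (Matrix.toEuclideanCLM (𝕜 := ℝ) V).IsPositive :=
    Matrix.isPositive_toEuclideanLin_iff.mpr hV.posSemidef
  simpa using hT.norm_apply_div_one_add_le v
end

section
/- Let V be an r×r real symmetric positive definite matrix with condition number μ(V) = ‖V‖·‖V⁻¹‖ (operator norms). Define φ̃(w) = ‖w‖/(1 + wᵀV⁻¹w) for w ∈ ℝ^r. Then φ̃ is differentiable at every w ≠ 0 and its gradient satisfies ‖∇φ̃(w)‖ ≤ 1 + μ(V)/2. -/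
/-!
Write `A = V⁻¹`, `t = ⟪w, A w⟫` and `q = 1 + t`. By the quotient rule,
`∇φ̃(w) = w / (‖w‖ q) - (2 ‖w‖ / q²) A w`. The first term has norm at most `1`. For the second,
Cauchy–Schwarz for the positive form `⟪·, A ·⟫`, applied to `w` and `V w`, gives
`‖w‖² ≤ ‖V‖ t`, so its norm is at most `2 ‖A‖ ‖w‖² / q² ≤ ‖V‖ ‖A‖ · 2t / (1 + t)² ≤ ‖V‖ ‖A‖ / 2`.
-/

open scoped RealInnerProductSpace

section

variable {E : Type*} [NormedAddCommGroup E] [InnerProductSpace ℝ E]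

theorem hasFDerivAt_norm_of_ne_zero {x : E} (hx : x ≠ 0) :
    HasFDerivAt (‖·‖) (‖x‖⁻¹ • innerSL ℝ x) x := by
  have hsq : ‖x‖ ^ 2 ≠ 0 := by positivity
  have h := (Real.hasDerivAt_sqrt hsq).comp_hasFDerivAt x
    (hasStrictFDerivAt_norm_sq x).hasFDerivAt
  simp only [Function.comp_def, Real.sqrt_sq (norm_nonneg _)] at h
  refine h.congr_fderiv ?_
  ext v
  simp only [one_div, mul_inv_rev, smul_apply, coe_innerSL_apply, nsmul_eq_mul, Nat.cast_ofNat,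
    smul_eq_mul]
  field_simp

theorem HasFDerivAt.div {𝕜 F : Type*} [NontriviallyNormedField 𝕜] [NormedAddCommGroup F]
    [NormedSpace 𝕜 F] {f g : F → 𝕜} {f' g' : F →L[𝕜] 𝕜} {x : F}
    (hf : HasFDerivAt f f' x) (hg : HasFDerivAt g g' x) (hx : g x ≠ 0) :
    HasFDerivAt (fun y => f y / g y) ((g x)⁻¹ • f' - (f x / g x ^ 2) • g') x := by
  have h := hf.mul ((hasDerivAt_inv hx).comp_hasFDerivAt x hg)
  simp only [Function.comp_def] at h
  simp only [div_eq_mul_inv]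
  refine h.congr_fderiv ?_
  ext v
  simp only [add_apply, smul_apply, smul_eq_mul, sub_apply]
  ring

theorem LinearMap.IsSymmetric.hasFDerivAt_inner_map_self {A : E →L[ℝ] E}
    (hA : (A : E →ₗ[ℝ] E).IsSymmetric) (x : E) :
    HasFDerivAt (fun y => ⟪y, A y⟫) ((2 : ℝ) • innerSL ℝ (A x)) x := by
  refine ((hasFDerivAt_id x).inner ℝ A.hasFDerivAt).congr_fderiv ?_
  ext v
  simp only [id_eq, ContinuousLinearMap.comp_apply, ContinuousLinearMap.prod_apply,
    ContinuousLinearMap.id_apply, fderivInnerCLM_apply, _root_.smul_apply, coe_innerSL_apply,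
    smul_eq_mul]
  rw [real_inner_comm (A x) v]
  linear_combination (hA x v).symm

namespace ContinuousLinearMap.IsPositive

variable {A : E →L[ℝ] E}

theorem inner_sq_le (hA : A.IsPositive) (x y : E) :
    ⟪x, A y⟫ ^ 2 ≤ ⟪x, A x⟫ * ⟪y, A y⟫ := by
  have hsymm : ⟪y, A x⟫ = ⟪x, A y⟫ := by
    rw [← hA.inner_left_eq_inner_right, real_inner_comm]
  have hquad : ∀ t : ℝ, 0 ≤ ⟪y, A y⟫ * (t * t) + 2 * ⟪x, A y⟫ * t + ⟪x, A x⟫ := fun t => by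
    have := hA.inner_nonneg_right (x + t • y)
    simp only [map_add, map_smul, inner_add_left, inner_add_right, real_inner_smul_left,
      real_inner_smul_right] at this
    linear_combination this + t * hsymm
  have := discrim_le_zero hquad
  rw [discrim] at this
  nlinarith

/-- With `B = A⁻¹` this is the bound `λ_min(A) ≥ 1 / ‖A⁻¹‖` on the smallest eigenvalue. -/
theorem norm_sq_le_opNorm_mul_inner (hA : A.IsPositive) {B : E →L[ℝ] E}
    (hAB : ∀ x, A (B x) = x) (w : E) : ‖w‖ ^ 2 ≤ ‖B‖ * ⟪w, A w⟫ := by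
  rcases eq_or_ne w 0 with rfl | hw
  · simp
  have hcs := hA.inner_sq_le w (B w)
  rw [hAB, real_inner_self_eq_norm_sq] at hcs
  have hBw : ⟪B w, w⟫ ≤ ‖B‖ * ‖w‖ ^ 2 := calc
    ⟪B w, w⟫ ≤ ‖B w‖ * ‖w‖ := real_inner_le_norm _ _
    _ ≤ ‖B‖ * ‖w‖ * ‖w‖ := by gcongr; exact B.le_opNorm w
    _ = ‖B‖ * ‖w‖ ^ 2 := by ring
  refine le_of_mul_le_mul_right ?_ (by positivity : 0 < ‖w‖ ^ 2)
  calc ‖w‖ ^ 2 * ‖w‖ ^ 2 = (‖w‖ ^ 2) ^ 2 := by ring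
    _ ≤ ⟪w, A w⟫ * ⟪B w, w⟫ := hcs
    _ ≤ ⟪w, A w⟫ * (‖B‖ * ‖w‖ ^ 2) := by gcongr; exact hA.inner_nonneg_right w
    _ = ‖B‖ * ⟪w, A w⟫ * ‖w‖ ^ 2 := by ring

end ContinuousLinearMap.IsPositive

noncomputable def phiTilde (A : E →L[ℝ] E) (u : E) : ℝ :=
  ‖u‖ / (1 + ⟪u, A u⟫)

variable {A : E →L[ℝ] E}

theorem ContinuousLinearMap.IsPositive.hasFDerivAt_phiTilde (hA : A.IsPositive) {w : E}
    (hw : w ≠ 0) :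
    HasFDerivAt (phiTilde A)
      ((1 + ⟪w, A w⟫)⁻¹ • (‖w‖⁻¹ • innerSL ℝ w) -
        (‖w‖ / (1 + ⟪w, A w⟫) ^ 2) • ((2 : ℝ) • innerSL ℝ (A w))) w :=
  (hasFDerivAt_norm_of_ne_zero hw).div
    ((hA.isSymmetric.hasFDerivAt_inner_map_self w).const_add 1)
    (by linarith [hA.inner_nonneg_right w])

theorem ContinuousLinearMap.IsPositive.norm_gradient_phiTilde_le [CompleteSpace E]
    (hA : A.IsPositive) {B : E →L[ℝ] E} (hAB : ∀ x, A (B x) = x) {w : E} (hw : w ≠ 0) :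
    ‖gradient (phiTilde A) w‖ ≤ 1 + ‖B‖ * ‖A‖ / 2 := by
  rw [← (InnerProductSpace.toDual ℝ E).norm_map, toDual_gradient,
    (hA.hasFDerivAt_phiTilde hw).fderiv]
  set t := ⟪w, A w⟫
  have ht : 0 ≤ t := hA.inner_nonneg_right w
  have hw0 : 0 < ‖w‖ := norm_pos_iff.mpr hw
  have hradial : ‖(1 + t)⁻¹ • (‖w‖⁻¹ • innerSL ℝ w)‖ ≤ 1 := by
    rw [norm_smul, norm_smul, innerSL_apply_norm, norm_inv, norm_inv, norm_norm,
      inv_mul_cancel₀ hw0.ne', mul_one, Real.norm_of_nonneg (by positivity)]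
    exact inv_le_one_of_one_le₀ (by linarith)
  have hquadratic :
      ‖(‖w‖ / (1 + t) ^ 2) • ((2 : ℝ) • innerSL ℝ (A w))‖ ≤ ‖B‖ * ‖A‖ / 2 := calc
    _ = 2 * ‖w‖ * ‖A w‖ / (1 + t) ^ 2 := by
      rw [norm_smul, norm_smul, innerSL_apply_norm, Real.norm_of_nonneg (by positivity),
        Real.norm_two]
      ring
    _ ≤ 2 * ‖w‖ * (‖A‖ * ‖w‖) / (1 + t) ^ 2 := by gcongr; exact A.le_opNorm w
    _ = 2 * ‖A‖ * ‖w‖ ^ 2 / (1 + t) ^ 2 := by ring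
    _ ≤ 2 * ‖A‖ * (‖B‖ * t) / (1 + t) ^ 2 := by
      gcongr
      exact hA.norm_sq_le_opNorm_mul_inner hAB w
    _ ≤ ‖B‖ * ‖A‖ / 2 := by
      rw [div_le_div_iff₀ (by positivity) two_pos]
      have : 0 ≤ ‖B‖ * ‖A‖ := by positivity
      nlinarith [mul_nonneg this (sq_nonneg (1 - t))]
  linarith [norm_sub_le ((1 + t)⁻¹ • (‖w‖⁻¹ • innerSL ℝ w))
    ((‖w‖ / (1 + t) ^ 2) • ((2 : ℝ) • innerSL ℝ (A w)))]

end

open scoped ComplexOrder in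
theorem Matrix.PosSemidef.isPositive_toEuclideanCLM {𝕜 n : Type*} [RCLike 𝕜] [Fintype n]
    [DecidableEq n] {M : Matrix n n 𝕜} (hM : M.PosSemidef) :
    (Matrix.toEuclideanCLM (𝕜 := 𝕜) M).IsPositive := by
  rw [← ContinuousLinearMap.isPositive_toLinearMap_iff,
    Matrix.coe_toEuclideanCLM_eq_toEuclideanLin]
  exact Matrix.isPositive_toEuclideanLin_iff.mpr hM

/-- Let `V` be an `r × r` real symmetric positive definite matrix with
condition number `μ(V) = ‖V‖ ⬝ ‖V⁻¹‖` (operator norms).  Define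
`φ̃(w) = ‖w‖ / (1 + wᵀ V⁻¹ w)`.  Then `φ̃` is differentiable at every `w ≠ 0` and its
gradient satisfies `‖∇φ̃(w)‖ ≤ 1 + μ(V)/2`. -/
theorem phi_tilde_grad_bound {r : ℕ} (V : Matrix (Fin r) (Fin r) ℝ) (hV : V.PosDef)
    (w : EuclideanSpace ℝ (Fin r)) (hw : w ≠ 0) :
    DifferentiableAt ℝ
        (fun u : EuclideanSpace ℝ (Fin r) =>
          ‖u‖ / (1 + ⟪u, (Matrix.toEuclideanCLM (𝕜 := ℝ) V⁻¹) u⟫)) w ∧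
      ‖gradient (fun u : EuclideanSpace ℝ (Fin r) =>
          ‖u‖ / (1 + ⟪u, (Matrix.toEuclideanCLM (𝕜 := ℝ) V⁻¹) u⟫)) w‖ ≤
        1 + (‖Matrix.toEuclideanCLM (𝕜 := ℝ) V‖ *
          ‖Matrix.toEuclideanCLM (𝕜 := ℝ) V⁻¹‖) / 2 := by
  have hA := hV.inv.posSemidef.isPositive_toEuclideanCLM
  have hAB (x : EuclideanSpace ℝ (Fin r)) :
      Matrix.toEuclideanCLM (𝕜 := ℝ) V⁻¹ (Matrix.toEuclideanCLM (𝕜 := ℝ) V x) = x := by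
    rw [← mul_apply_eq_comp, ← map_mul,
      Matrix.nonsing_inv_mul V ((Matrix.isUnit_iff_isUnit_det V).mp hV.isUnit), map_one,
      one_apply_eq_self]
  exact ⟨(hA.hasFDerivAt_phiTilde hw).differentiableAt, hA.norm_gradient_phiTilde_le hAB hw⟩
end

section
/- Let F : ℝ^d → ℝ^r be differentiable with ‖F′(s)‖ ≤ L_F for all s, let C be an r×r real symmetric positive definite matrix, f̄ ∈ ℝ^r, and ᾱ ≥ 0. Define Q_F(s) = −ᾱ log(1 + D_F(s)) with D_F(s) = (f̄ − F(s))ᵀC⁻¹(f̄ − F(s)). Then for every s ∈ ℝ^d, ‖∇Q_F(s)‖ ≤ 2 L_F ᾱ C_φ(C⁻¹), where C_φ(V) = √‖V‖/2 and ‖·‖ is the operator norm; equivalently ‖∇Q_F(s)‖ ≤ L_F ᾱ √‖C⁻¹‖. -/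
/-!
With `g = f̄ − F(s)` and `A = C⁻¹`, the chain rule gives
`Q_F′(s) v = −ᾱ (1 + D)⁻¹ · 2⟪A g, −F′(s) v⟫`. For a positive operator `A`, Cauchy–Schwarz for
the semi-inner product `⟪x, A y⟫` at `x = g`, `y = A g` yields `‖A g‖² ≤ ‖A‖ ⟪g, A g⟫ = ‖A‖ D`,
and `2√D ≤ 1 + D`; hence `2‖A g‖ / (1 + D) ≤ √‖A‖` uniformly in `g`.
-/

open scoped RealInnerProductSpace

namespace ContinuousLinearMap

variable {E F : Type*} [NormedAddCommGroup E] [InnerProductSpace ℝ E]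
  [NormedAddCommGroup F] [InnerProductSpace ℝ F]

theorem IsPositive.norm_apply_sq_le_s8 {A : E →L[ℝ] E} (hA : A.IsPositive) (x : E) :
    ‖A x‖ ^ 2 ≤ ‖A‖ * ⟪x, A x⟫ := by
  have hcs : ⟪x, A (A x)⟫ * ⟪A x, A x⟫ ≤ ⟪x, A x⟫ * ⟪A x, A (A x)⟫ :=
    LinearMap.BilinForm.apply_mul_apply_le_of_forall_zero_le ((innerₗ E).compl₂ A.toLinearMap)
      hA.inner_nonneg_right x (A x)
  have hx : ⟪x, A (A x)⟫ = ‖A x‖ ^ 2 := by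
    rw [← hA.inner_left_eq_inner_right, real_inner_self_eq_norm_sq]
  have hAx : ⟪A x, A (A x)⟫ ≤ ‖A‖ * ‖A x‖ ^ 2 :=
    calc ⟪A x, A (A x)⟫ ≤ ‖A x‖ * ‖A (A x)‖ := real_inner_le_norm _ _
      _ ≤ ‖A x‖ * (‖A‖ * ‖A x‖) := by gcongr; exact A.le_opNorm _
      _ = ‖A‖ * ‖A x‖ ^ 2 := by ring
  rw [hx, real_inner_self_eq_norm_sq] at hcs
  rcases (sq_nonneg ‖A x‖).eq_or_lt with h0 | hpos
  · rw [← h0]; exact mul_nonneg (norm_nonneg A) (hA.inner_nonneg_right x)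
  · refine le_of_mul_le_mul_right ?_ hpos
    nlinarith [mul_le_mul_of_nonneg_left hAx (hA.inner_nonneg_right x)]

theorem IsPositive.two_mul_norm_apply_le {A : E →L[ℝ] E} (hA : A.IsPositive) (x : E) :
    2 * ‖A x‖ ≤ √‖A‖ * (1 + ⟪x, A x⟫) := by
  have hAx : ‖A x‖ ≤ √‖A‖ * √⟪x, A x⟫ := by
    rw [← Real.sqrt_mul (norm_nonneg A)]
    exact Real.le_sqrt_of_sq_le (hA.norm_apply_sq_le_s8 x)
  have hamgm : 2 * √⟪x, A x⟫ ≤ 1 + ⟪x, A x⟫ := by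
    have := two_mul_le_add_sq (√⟪x, A x⟫) 1
    rw [Real.sq_sqrt (hA.inner_nonneg_right x)] at this
    linarith
  calc 2 * ‖A x‖ ≤ √‖A‖ * (2 * √⟪x, A x⟫) := by linarith
    _ ≤ √‖A‖ * (1 + ⟪x, A x⟫) := by gcongr

theorem _root_.HasFDerivAt.inner_apply_self {A : F →L[ℝ] F} (hA : A.IsSymmetric) {G : E → F}
    {G' : E →L[ℝ] F} {s : E} (hG : HasFDerivAt G G' s) :
    HasFDerivAt (fun t => ⟪G t, A (G t)⟫) ((2 : ℝ) • (innerSL ℝ (A (G s))).comp G') s := by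
  refine (hG.inner ℝ (A.hasFDerivAt.comp s hG)).congr_fderiv ?_
  ext v
  simp only [smul_apply, comp_apply, innerSL_apply_apply, fderivInnerCLM_apply, prod_apply,
    Function.comp_apply, smul_eq_mul]
  have hsymm : ⟪A (G s), G' v⟫ = ⟪G s, A (G' v)⟫ := hA (G s) (G' v)
  rw [real_inner_comm (A (G s)), hsymm]
  ring

theorem IsPositive.norm_fderiv_neg_mul_log_one_add_inner_apply_self_le {A : F →L[ℝ] F}
    (hA : A.IsPositive) {G : E → F} {s : E} (hG : DifferentiableAt ℝ G s) {α : ℝ} (hα : 0 ≤ α) :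
    ‖fderiv ℝ (fun t => -α * Real.log (1 + ⟪G t, A (G t)⟫)) s‖ ≤
      α * √‖A‖ * ‖fderiv ℝ G s‖ := by
  set q := ⟪G s, A (G s)⟫
  have hq : 0 < 1 + q := by linarith [hA.inner_nonneg_right (G s)]
  rw [((((hG.hasFDerivAt.inner_apply_self hA.isSymmetric).const_add 1).log hq.ne').const_mul
    (-α)).fderiv]
  calc ‖(-α) • (1 + q)⁻¹ • (2 : ℝ) • (innerSL ℝ (A (G s))).comp (fderiv ℝ G s)‖
      ≤ α * ((1 + q)⁻¹ * (2 * (‖A (G s)‖ * ‖fderiv ℝ G s‖))) := by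
        rw [norm_smul, norm_smul, norm_smul, norm_neg, Real.norm_of_nonneg hα,
          Real.norm_of_nonneg (inv_nonneg.mpr hq.le), Real.norm_two]
        gcongr
        exact (opNorm_comp_le _ _).trans_eq (by rw [innerSL_apply_norm])
    _ = α * ((1 + q)⁻¹ * (2 * ‖A (G s)‖)) * ‖fderiv ℝ G s‖ := by ring
    _ ≤ α * √‖A‖ * ‖fderiv ℝ G s‖ := by
        gcongr
        exact (inv_mul_le_iff₀ hq).mpr ((hA.two_mul_norm_apply_le _).trans_eq (mul_comm _ _))

end ContinuousLinearMap

/-- With `F : ℝ^d → ℝ^r` differentiable, `‖F′(s)‖ ≤ L_F` everywhere, `C`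
symmetric positive definite, `f̄ ∈ ℝ^r`, `ᾱ ≥ 0`, and
`Q_F(s) = −ᾱ log(1 + D_F(s))` where `D_F(s) = (f̄ − F(s))ᵀ C⁻¹ (f̄ − F(s))`, the gradient
is bounded: `‖∇Q_F(s)‖ ≤ 2 L_F ᾱ C_φ(C⁻¹)` with `C_φ(V) = √‖V‖ / 2`. -/
theorem QF_gradient_bound {d r : ℕ}
    (F : EuclideanSpace ℝ (Fin d) → EuclideanSpace ℝ (Fin r))
    (hF : Differentiable ℝ F) (L_F : ℝ) (hF' : ∀ s, ‖fderiv ℝ F s‖ ≤ L_F)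
    (C : Matrix (Fin r) (Fin r) ℝ) (hC : C.PosDef)
    (fbar : EuclideanSpace ℝ (Fin r)) (αbar : ℝ) (hα : 0 ≤ αbar)
    (D_F Q_F : EuclideanSpace ℝ (Fin d) → ℝ)
    (hD : D_F = fun s => ⟪fbar - F s, (Matrix.toEuclideanCLM (𝕜 := ℝ) C⁻¹) (fbar - F s)⟫)
    (hQ : Q_F = fun s => -αbar * Real.log (1 + D_F s)) :
    ∀ s, ‖gradient Q_F s‖ ≤
      2 * L_F * αbar * (Real.sqrt ‖Matrix.toEuclideanCLM (𝕜 := ℝ) C⁻¹‖ / 2) := by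
  intro s
  have hA := hC.inv.posSemidef.isPositive_toEuclideanCLM
  have hG : DifferentiableAt ℝ (fun t => fbar - F t) s := (hF s).const_sub fbar
  calc ‖gradient Q_F s‖
      = ‖fderiv ℝ (fun t => -αbar * Real.log (1 + ⟪fbar - F t,
          Matrix.toEuclideanCLM (𝕜 := ℝ) C⁻¹ (fbar - F t)⟫)) s‖ := by
        rw [gradient, LinearIsometryEquiv.norm_map, hQ, hD]
    _ ≤ αbar * √‖Matrix.toEuclideanCLM (𝕜 := ℝ) C⁻¹‖ * ‖fderiv ℝ F s‖ := by
        simpa only [fderiv_const_sub, norm_neg] using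
          hA.norm_fderiv_neg_mul_log_one_add_inner_apply_self_le hG hα
    _ ≤ αbar * √‖Matrix.toEuclideanCLM (𝕜 := ℝ) C⁻¹‖ * L_F := by gcongr; exact hF' s
    _ = 2 * L_F * αbar * (√‖Matrix.toEuclideanCLM (𝕜 := ℝ) C⁻¹‖ / 2) := by ring
end

section
/- Let F : ℝ^d → ℝ^r be differentiable such that F is Lipschitz with constant L_F and its Jacobian F′ is Lipschitz with constant L′_F (in operator norm). Let C be an r×r real symmetric positive definite matrix, f̄ ∈ ℝ^r, ᾱ ≥ 0, and define Q_F(s) = −ᾱ log(1 + D_F(s)) with D_F(s) = (f̄ − F(s))ᵀC⁻¹(f̄ − F(s)). Then ∇Q_F is Lipschitz continuous: for all s, s̃ ∈ ℝ^d, ‖∇Q_F(s) − ∇Q_F(s̃)‖ ≤ 2ᾱ(L′_F C_φ(C⁻¹) + L_F² L_φ(C⁻¹))·‖s − s̃‖, where C_φ(V) = √‖V‖/2 and L_φ(V) = ‖V‖(1 + μ(V)/2) with μ(V) = ‖V‖·‖V⁻¹‖. -/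
/-!
Write `A = C⁻¹` (a positive operator) and `φ(x) = (1 + ⟪x, A x⟫)⁻¹ • A x`; then
`∇Q_F(s) = 2ᾱ F′(s)* φ(f̄ − F(s))`. Cauchy–Schwarz for the semi-inner product `⟪x, A y⟫` gives
`‖A x‖² ≤ ‖A‖ ⟪x, A x⟫`, hence `‖φ‖ ≤ √‖A‖ / 2` by AM–GM, and `φ` is `(3/2)‖A‖`-Lipschitz.
Splitting the difference of gradients as `(F′(s) − F′(t))* φ(…) + F′(t)* (φ(…) − φ(…))` gives
the constant `L′_F √‖A‖ / 2 + (3/2) L_F² ‖A‖`, and `3/2 ≤ 1 + μ(A)/2` since `μ(A) ≥ 1`.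
-/

open scoped RealInnerProductSpace
open Real

namespace ContinuousLinearMap

variable {E : Type*} [NormedAddCommGroup E] [InnerProductSpace ℝ E] {T : E →L[ℝ] E}

/-- Half the gradient of `x ↦ log (1 + ⟪x, T x⟫)`. -/
noncomputable def dampedMap (T : E →L[ℝ] E) (x : E) : E := (1 + ⟪x, T x⟫)⁻¹ • T x

theorem IsPositive.inner_map_comm (hT : T.IsPositive) (x y : E) : ⟪x, T y⟫ = ⟪y, T x⟫ := by
  rw [← hT.inner_left_eq_inner_right, real_inner_comm]

theorem IsPositive.inner_map_sq_le (hT : T.IsPositive) (x y : E) :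
    ⟪x, T y⟫ ^ 2 ≤ ⟪x, T x⟫ * ⟪y, T y⟫ := by
  have hquad : ∀ t : ℝ, 0 ≤ ⟪y, T y⟫ * (t * t) + 2 * ⟪x, T y⟫ * t + ⟪x, T x⟫ := fun t => by
    have h := hT.inner_nonneg_right (x + t • y)
    simp only [map_add, map_smul, inner_add_left, inner_add_right, real_inner_smul_left,
      real_inner_smul_right, hT.inner_map_comm y x] at h
    linarith
  have := discrim_le_zero hquad
  rw [discrim] at this
  linarith

theorem IsPositive.norm_map_sq_le (hT : T.IsPositive) (x : E) :
    ‖T x‖ ^ 2 ≤ ‖T‖ * ⟪x, T x⟫ := by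
  have hself : ⟪x, T (T x)⟫ = ‖T x‖ ^ 2 := by
    rw [← hT.inner_left_eq_inner_right, real_inner_self_eq_norm_sq]
  have hTT : ⟪T x, T (T x)⟫ ≤ ‖T‖ * ‖T x‖ ^ 2 := calc
    ⟪T x, T (T x)⟫ ≤ ‖T x‖ * ‖T (T x)‖ := real_inner_le_norm _ _
    _ ≤ ‖T x‖ * (‖T‖ * ‖T x‖) := by gcongr; exact T.le_opNorm _
    _ = ‖T‖ * ‖T x‖ ^ 2 := by ring
  have hcs := hT.inner_map_sq_le x (T x)
  rw [hself] at hcs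
  rcases (sq_nonneg ‖T x‖).eq_or_lt with h0 | hpos
  · rw [← h0]
    exact mul_nonneg (norm_nonneg T) (hT.inner_nonneg_right x)
  · nlinarith [mul_le_mul_of_nonneg_left hTT (hT.inner_nonneg_right x)]

theorem IsPositive.norm_dampedMap_le (hT : T.IsPositive) (x : E) :
    ‖dampedMap T x‖ ≤ √‖T‖ / 2 := by
  set a := ⟪x, T x⟫
  have ha : 0 ≤ a := hT.inner_nonneg_right x
  have hTx : ‖T x‖ ≤ √‖T‖ * √a := by
    rw [← sqrt_mul (norm_nonneg T)]
    exact le_sqrt_of_sq_le (hT.norm_map_sq_le x)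
  -- AM-GM: `2 √a ≤ 1 + a`
  have hamgm : √a * (1 + a)⁻¹ ≤ 1 / 2 := by
    rw [← div_eq_mul_inv, div_le_div_iff₀ (by positivity) two_pos]
    nlinarith [sq_nonneg (√a - 1), sq_sqrt ha]
  calc ‖dampedMap T x‖ = (1 + a)⁻¹ * ‖T x‖ := by
        rw [dampedMap, norm_smul, norm_inv, norm_of_nonneg (by positivity)]
    _ ≤ (1 + a)⁻¹ * (√‖T‖ * √a) := by gcongr
    _ = √‖T‖ * (√a * (1 + a)⁻¹) := by ring
    _ ≤ √‖T‖ * (1 / 2) := by gcongr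
    _ = √‖T‖ / 2 := by ring

theorem IsPositive.inner_add_map_add_le (hT : T.IsPositive) (x y : E) :
    ⟪x + y, T (x + y)⟫ ≤ 2 * ⟪x, T x⟫ + 2 * ⟪y, T y⟫ := by
  have h := hT.inner_nonneg_right (x - y)
  simp only [map_add, map_sub, inner_add_left, inner_add_right, inner_sub_left,
    inner_sub_right, hT.inner_map_comm x y] at h ⊢
  linarith

theorem IsPositive.inner_self_map_sub_eq (hT : T.IsPositive) (x y : E) :
    ⟪x, T x⟫ - ⟪y, T y⟫ = ⟪x - y, T (x + y)⟫ := by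
  simp only [map_add, inner_add_right, inner_sub_left, hT.inner_map_comm x y]
  ring

theorem IsPositive.norm_dampedMap_sub_le (hT : T.IsPositive) (x y : E) :
    ‖dampedMap T x - dampedMap T y‖ ≤ 3 / 2 * ‖T‖ * ‖x - y‖ := by
  set a := ⟪x, T x⟫
  set b := ⟪y, T y⟫
  have ha : 0 ≤ a := hT.inner_nonneg_right x
  have hb : 0 ≤ b := hT.inner_nonneg_right y
  set c := (1 + a)⁻¹
  set c' := (1 + b)⁻¹
  have hc : 0 < c := by positivity
  have hc' : 0 < c' := by positivity
  have hsplit : dampedMap T x - dampedMap T y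
      = ((c + c') / 2) • T (x - y) + ((c - c') / 2) • T (x + y) := by
    simp only [dampedMap, map_sub, map_add]
    module
  have hcc' : |c - c'| = c * c' * |a - b| := by
    have hdiff : c - c' = c * c' * (b - a) := by
      simp only [c, c']
      field_simp
      ring
    rw [hdiff, abs_mul, abs_sub_comm, abs_of_pos (mul_pos hc hc')]
  have hab : |a - b| ≤ ‖x - y‖ * ‖T (x + y)‖ := by
    rw [hT.inner_self_map_sub_eq]
    exact abs_real_inner_le_norm _ _
  have hTxy : ‖T (x + y)‖ ^ 2 ≤ ‖T‖ * (2 * a + 2 * b) :=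
    (hT.norm_map_sq_le _).trans (by gcongr; exact hT.inner_add_map_add_le x y)
  have hcoeff : (c + c') / 2 + c * c' * (a + b) ≤ 3 / 2 := by
    simp only [c, c']
    field_simp
    nlinarith [mul_nonneg ha hb]
  calc ‖dampedMap T x - dampedMap T y‖
      ≤ (c + c') / 2 * ‖T (x - y)‖ + |c - c'| / 2 * ‖T (x + y)‖ := by
        rw [hsplit]
        refine (norm_add_le _ _).trans_eq ?_
        rw [norm_smul, norm_smul, norm_of_nonneg (by positivity), norm_div, norm_two,
          Real.norm_eq_abs]
    _ ≤ (c + c') / 2 * (‖T‖ * ‖x - y‖) + c * c' / 2 * ‖T (x + y)‖ ^ 2 * ‖x - y‖ := by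
        rw [hcc']
        gcongr ?_ + ?_
        · gcongr
          exact T.le_opNorm _
        · calc c * c' * |a - b| / 2 * ‖T (x + y)‖
              ≤ c * c' * (‖x - y‖ * ‖T (x + y)‖) / 2 * ‖T (x + y)‖ := by gcongr
            _ = c * c' / 2 * ‖T (x + y)‖ ^ 2 * ‖x - y‖ := by ring
    _ ≤ (c + c') / 2 * (‖T‖ * ‖x - y‖) + c * c' / 2 * (‖T‖ * (2 * a + 2 * b)) * ‖x - y‖ := by
        gcongr
    _ = ((c + c') / 2 + c * c' * (a + b)) * ‖T‖ * ‖x - y‖ := by ring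
    _ ≤ 3 / 2 * ‖T‖ * ‖x - y‖ := by gcongr

theorem IsPositive.hasGradientAt_log_one_add_inner_self [CompleteSpace E] (hT : T.IsPositive)
    (x : E) : HasGradientAt (fun y => log (1 + ⟪y, T y⟫)) ((2 : ℝ) • dampedMap T x) x := by
  have hquad : HasFDerivAt (fun y => ⟪y, T y⟫)
      ((fderivInnerCLM ℝ (x, T x)).comp ((ContinuousLinearMap.id ℝ E).prod T)) x :=
    (hasFDerivAt_id x).inner ℝ T.hasFDerivAt
  have hpos : 0 < 1 + ⟪x, T x⟫ := by linarith [hT.inner_nonneg_right x]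
  rw [hasGradientAt_iff_hasFDerivAt]
  refine ((hquad.const_add 1).log hpos.ne').congr_fderiv ?_
  ext v
  simp only [dampedMap, InnerProductSpace.toDual_apply_apply, smul_apply, comp_apply,
    prod_apply, fderivInnerCLM_apply, id_apply, smul_eq_mul, real_inner_smul_left,
    hT.inner_map_comm x v, real_inner_comm (T x) v]
  ring

end ContinuousLinearMap

open ContinuousLinearMap

theorem HasGradientAt.comp_hasFDerivAt {E G : Type*} [NormedAddCommGroup E]
    [InnerProductSpace ℝ E] [CompleteSpace E] [NormedAddCommGroup G] [InnerProductSpace ℝ G]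
    [CompleteSpace G] {h : G → ℝ} {g : E → G} {g' : E →L[ℝ] G} {x : E} {v : G}
    (hh : HasGradientAt h v (g x)) (hg : HasFDerivAt g g' x) :
    HasGradientAt (h ∘ g) (adjoint g' v) x := by
  rw [hasGradientAt_iff_hasFDerivAt] at hh ⊢
  refine (hh.comp x hg).congr_fderiv ?_
  ext w
  simp only [comp_apply, InnerProductSpace.toDual_apply_apply, adjoint_inner_left]

section

variable {E G : Type*} [NormedAddCommGroup E] [InnerProductSpace ℝ E] [CompleteSpace E]
  [NormedAddCommGroup G] [InnerProductSpace ℝ G] [CompleteSpace G] {T : G →L[ℝ] G} {F : E → G}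

theorem hasGradientAt_neg_mul_log_one_add_inner_sub (hT : T.IsPositive) (fbar : G) (α : ℝ)
    {s : E} (hF : DifferentiableAt ℝ F s) :
    HasGradientAt (fun s => -α * log (1 + ⟪fbar - F s, T (fbar - F s)⟫))
      ((2 * α) • adjoint (fderiv ℝ F s) (dampedMap T (fbar - F s))) s := by
  have hlog := (hT.hasGradientAt_log_one_add_inner_self (fbar - F s)).comp_hasFDerivAt
    (g := fun s => fbar - F s) (hF.hasFDerivAt.const_sub fbar)
  rw [hasGradientAt_iff_hasFDerivAt] at hlog ⊢
  refine (hlog.const_mul (-α)).congr_fderiv ?_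
  ext v
  simp only [map_neg, map_smul, neg_apply, smul_apply, InnerProductSpace.toDual_apply_apply,
    smul_eq_mul]
  ring

theorem norm_adjoint_fderiv_dampedMap_sub_le (hT : T.IsPositive) {L L' : ℝ} (hL : 0 ≤ L)
    (hFlip : ∀ s t, ‖F s - F t‖ ≤ L * ‖s - t‖)
    (hF'lip : ∀ s t, ‖fderiv ℝ F s - fderiv ℝ F t‖ ≤ L' * ‖s - t‖) (fbar : G) (s t : E) :
    ‖adjoint (fderiv ℝ F s) (dampedMap T (fbar - F s)) -
        adjoint (fderiv ℝ F t) (dampedMap T (fbar - F t))‖ ≤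
      (L' * (√‖T‖ / 2) + L ^ 2 * (3 / 2 * ‖T‖)) * ‖s - t‖ := by
  set u := fun s => dampedMap T (fbar - F s)
  set P := fun s => adjoint (fderiv ℝ F s)
  have hP : ‖P s - P t‖ ≤ L' * ‖s - t‖ := by
    simpa only [P, ← map_sub, LinearIsometryEquiv.norm_map] using hF'lip s t
  have hPt : ‖P t‖ ≤ L := by
    simpa only [P, LinearIsometryEquiv.norm_map] using norm_fderiv_le_of_lip' ℝ hL
      (Filter.Eventually.of_forall fun x => hFlip x t)
  have hu : ‖u s - u t‖ ≤ 3 / 2 * ‖T‖ * (L * ‖s - t‖) := by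
    refine (hT.norm_dampedMap_sub_le _ _).trans ?_
    rw [sub_sub_sub_cancel_left, norm_sub_rev]
    gcongr
    exact hFlip s t
  calc ‖P s (u s) - P t (u t)‖ = ‖(P s - P t) (u s) + P t (u s - u t)‖ := by
        rw [sub_apply, map_sub]
        abel_nf
    _ ≤ ‖P s - P t‖ * ‖u s‖ + ‖P t‖ * ‖u s - u t‖ :=
        norm_add_le_of_le ((P s - P t).le_opNorm _) ((P t).le_opNorm _)
    _ ≤ L' * ‖s - t‖ * (√‖T‖ / 2) + L * (3 / 2 * ‖T‖ * (L * ‖s - t‖)) := by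
        gcongr
        · exact (norm_nonneg _).trans hP
        · exact hT.norm_dampedMap_le _
    _ = (L' * (√‖T‖ / 2) + L ^ 2 * (3 / 2 * ‖T‖)) * ‖s - t‖ := by ring

end

theorem three_halves_mul_norm_le_of_mul_eq_one {R : Type*} [NormedRing R] {a b : R}
    (h : a * b = 1) : 3 / 2 * ‖a‖ ≤ ‖a‖ * (1 + ‖a‖ * ‖b‖ / 2) := by
  have hle : ‖a‖ ≤ ‖a‖ * ‖b‖ * ‖a‖ := calc
    ‖a‖ = ‖a * b * a‖ := by rw [h, one_mul]
    _ ≤ ‖a‖ * ‖b‖ * ‖a‖ := norm_mul₃_le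
  nlinarith [norm_nonneg a]

/-- Let `F : ℝ^d → ℝ^r` be differentiable, Lipschitz with constant `L_F`,
with Jacobian `F′` Lipschitz (in operator norm) with constant `L′_F`.  Let `C` be
symmetric positive definite, `f̄ ∈ ℝ^r`, `ᾱ ≥ 0`, and
`Q_F(s) = −ᾱ log(1 + D_F(s))` with `D_F(s) = (f̄ − F(s))ᵀ C⁻¹ (f̄ − F(s))`.  Then `∇Q_F`
is Lipschitz with constant `2ᾱ (L′_F C_φ(C⁻¹) + L_F² L_φ(C⁻¹))`, where
`C_φ(V) = √‖V‖/2` and `L_φ(V) = ‖V‖ (1 + μ(V)/2)`, `μ(V) = ‖V‖ ⬝ ‖V⁻¹‖`. -/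
theorem QF_gradient_lipschitz {d r : ℕ}
    (F : EuclideanSpace ℝ (Fin d) → EuclideanSpace ℝ (Fin r))
    (hF : Differentiable ℝ F) (L_F L'_F : ℝ)
    (hFlip : ∀ s t, ‖F s - F t‖ ≤ L_F * ‖s - t‖)
    (hF'lip : ∀ s t, ‖fderiv ℝ F s - fderiv ℝ F t‖ ≤ L'_F * ‖s - t‖)
    (C : Matrix (Fin r) (Fin r) ℝ) (hC : C.PosDef)
    (fbar : EuclideanSpace ℝ (Fin r)) (αbar : ℝ) (hα : 0 ≤ αbar)
    (D_F Q_F : EuclideanSpace ℝ (Fin d) → ℝ)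
    (hD : D_F = fun s => ⟪fbar - F s, (Matrix.toEuclideanCLM (𝕜 := ℝ) C⁻¹) (fbar - F s)⟫)
    (hQ : Q_F = fun s => -αbar * Real.log (1 + D_F s)) :
    ∀ s t, ‖gradient Q_F s - gradient Q_F t‖ ≤
      2 * αbar *
          (L'_F * (Real.sqrt ‖Matrix.toEuclideanCLM (𝕜 := ℝ) C⁻¹‖ / 2) +
            L_F ^ 2 * (‖Matrix.toEuclideanCLM (𝕜 := ℝ) C⁻¹‖ *
              (1 + (‖Matrix.toEuclideanCLM (𝕜 := ℝ) C⁻¹‖ *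
                ‖Matrix.toEuclideanCLM (𝕜 := ℝ) C‖) / 2))) * ‖s - t‖ := by
  intro s t
  set A := Matrix.toEuclideanCLM (𝕜 := ℝ) C⁻¹
  have hA : A.IsPositive := by
    rw [← isPositive_toLinearMap_iff]
    exact Matrix.isPositive_toEuclideanLin_iff.mpr hC.inv.posSemidef
  have hμ : 3 / 2 * ‖A‖ ≤ ‖A‖ * (1 + ‖A‖ * ‖Matrix.toEuclideanCLM (𝕜 := ℝ) C‖ / 2) := by
    refine three_halves_mul_norm_le_of_mul_eq_one ?_
    rw [← map_mul, Matrix.nonsing_inv_mul _ ((Matrix.isUnit_iff_isUnit_det _).mp hC.isUnit),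
      map_one]
  have hgrad : ∀ u, gradient Q_F u =
      (2 * αbar) • adjoint (fderiv ℝ F u) (dampedMap A (fbar - F u)) := fun u => by
    subst hQ hD
    exact (hasGradientAt_neg_mul_log_one_add_inner_sub hA fbar αbar (hF u)).gradient
  rcases eq_or_ne s t with rfl | hst
  · simp
  have hL : 0 ≤ L_F := nonneg_of_mul_nonneg_left ((norm_nonneg _).trans (hFlip s t))
    (norm_pos_iff.mpr (sub_ne_zero.mpr hst))
  rw [hgrad, hgrad, ← smul_sub, norm_smul, norm_of_nonneg (by positivity)]
  calc 2 * αbar * ‖_‖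
      ≤ 2 * αbar * ((L'_F * (√‖A‖ / 2) + L_F ^ 2 * (3 / 2 * ‖A‖)) * ‖s - t‖) := by
        gcongr
        exact norm_adjoint_fderiv_dampedMap_sub_le hA hL hFlip hF'lip fbar s t
    _ ≤ _ := by
        rw [← mul_assoc]
        gcongr 2 * αbar * (_ + _ * ?_) * _
end

section
/- Let m₁, m₂ ∈ ℝ³ and c > 0, and define 𝒢(s) = (1/c)(‖s − m₁‖ − ‖s − m₂‖). Then 𝒢 is twice differentiable at every s with s ≠ m₁ and s ≠ m₂, with Hessian 𝒢″(s) = (1/(c‖s − m₁‖))(I − e₁e₁ᵀ) − (1/(c‖s − m₂‖))(I − e₂e₂ᵀ), where eᵢ = (s − mᵢ)/‖s − mᵢ‖; moreover, if R > 0 and min{‖s − m₁‖, ‖s − m₂‖} ≥ R, then the operator norm of the Hessian satisfies ‖𝒢″(s)‖ ≤ 3/(cR). -/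
/-!
The gradient of `s ↦ ‖s - m‖` is the unit vector `e = ‖s - m‖⁻¹ • (s - m)`, and differentiating
`u ↦ ‖u‖⁻¹ • u` gives `‖s - m‖⁻¹ (I - e eᵀ)`. For a unit vector `e`, `I - e eᵀ` is the orthogonal
projection onto `e^⊥`, so it has operator norm at most `1`; the triangle inequality then bounds
the Hessian by `2 / (c R)`.
-/

open Filter Topology

noncomputable section

variable {F : Type*} [NormedAddCommGroup F] [InnerProductSpace ℝ F]

theorem hasFDerivAt_norm {x : F} (hx : x ≠ 0) :
    HasFDerivAt (‖·‖) (innerSL ℝ (‖x‖⁻¹ • x)) x := by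
  have hx' : ‖x‖ ≠ 0 := norm_ne_zero_iff.2 hx
  have h := ((hasStrictFDerivAt_norm_sq x).hasFDerivAt).sqrt (pow_ne_zero 2 hx')
  simp only [Real.sqrt_sq (norm_nonneg _)] at h
  refine h.congr_fderiv ?_
  ext y
  simp only [one_div, mul_inv_rev, smul_apply, coe_innerSL_apply, nsmul_eq_mul, Nat.cast_ofNat,
    smul_eq_mul, map_smul]
  field_simp

theorem hasFDerivAt_norm_inv_smul_self {x : F} (hx : x ≠ 0) :
    HasFDerivAt (fun u : F => ‖u‖⁻¹ • u)
      (‖x‖⁻¹ • (ContinuousLinearMap.id ℝ F - (innerSL ℝ (‖x‖⁻¹ • x)).smulRight (‖x‖⁻¹ • x))) x := by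
  have hx' : ‖x‖ ≠ 0 := norm_ne_zero_iff.2 hx
  have h := ((hasDerivAt_inv hx').comp_hasFDerivAt x (hasFDerivAt_norm hx)).smul (hasFDerivAt_id x)
  refine h.congr_fderiv ?_
  ext y
  simp only [Function.comp_apply, map_smul, smul_smul, neg_mul, neg_smul, id_eq, add_apply,
    smul_apply, ContinuousLinearMap.id_apply, ContinuousLinearMap.smulRight_apply, neg_apply,
    coe_innerSL_apply, smul_eq_mul, sub_apply]
  match_scalars <;> field_simp

theorem id_sub_innerSL_smulRight_eq_starProjection {e : F} (he : ‖e‖ = 1) :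
    ContinuousLinearMap.id ℝ F - (innerSL ℝ e).smulRight e = (ℝ ∙ e)ᗮ.starProjection := by
  rw [Submodule.starProjection_orthogonal']
  ext w
  simp [Submodule.starProjection_unit_singleton ℝ he]

theorem norm_smul_id_sub_innerSL_smulRight_le {e : F} (he : ‖e‖ = 1) (a : ℝ) :
    ‖a • (ContinuousLinearMap.id ℝ F - (innerSL ℝ e).smulRight e)‖ ≤ |a| := by
  rw [id_sub_innerSL_smulRight_eq_starProjection he, norm_smul, Real.norm_eq_abs]
  exact mul_le_of_le_one_right (abs_nonneg a) (Submodule.starProjection_norm_le _)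

def itd (c : ℝ) (m₁ m₂ s : F) : ℝ := (1 / c) * (‖s - m₁‖ - ‖s - m₂‖)

def itdHessian (c : ℝ) (m₁ m₂ s : F) : F →L[ℝ] F :=
  (1 / (c * ‖s - m₁‖)) • (ContinuousLinearMap.id ℝ F -
      (innerSL ℝ (‖s - m₁‖⁻¹ • (s - m₁))).smulRight (‖s - m₁‖⁻¹ • (s - m₁))) -
    (1 / (c * ‖s - m₂‖)) • (ContinuousLinearMap.id ℝ F -
      (innerSL ℝ (‖s - m₂‖⁻¹ • (s - m₂))).smulRight (‖s - m₂‖⁻¹ • (s - m₂)))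

variable {c : ℝ} {m₁ m₂ s : F}

theorem hasGradientAt_itd [CompleteSpace F] (h₁ : s ≠ m₁) (h₂ : s ≠ m₂) :
    HasGradientAt (itd c m₁ m₂)
      ((1 / c) • (‖s - m₁‖⁻¹ • (s - m₁) - ‖s - m₂‖⁻¹ • (s - m₂))) s := by
  have hdist : ∀ {m : F}, s ≠ m →
      HasFDerivAt (fun u : F => ‖u - m‖) (innerSL ℝ (‖s - m‖⁻¹ • (s - m))) s :=
    fun h => (hasFDerivAt_comp_sub _).2 (hasFDerivAt_norm (sub_ne_zero.2 h))
  refine hasGradientAt_iff_hasFDerivAt.2 <|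
    (((hdist h₁).sub (hdist h₂)).const_mul (1 / c)).congr_fderiv ?_
  ext v
  simp

theorem gradient_itd_eventuallyEq [CompleteSpace F] (h₁ : s ≠ m₁) (h₂ : s ≠ m₂) :
    gradient (itd c m₁ m₂) =ᶠ[𝓝 s]
      fun u => (1 / c) • (‖u - m₁‖⁻¹ • (u - m₁) - ‖u - m₂‖⁻¹ • (u - m₂)) := by
  filter_upwards [isOpen_ne.mem_nhds h₁, isOpen_ne.mem_nhds h₂] with u hu₁ hu₂
  exact (hasGradientAt_itd hu₁ hu₂).gradient

theorem hasFDerivAt_gradient_itd [CompleteSpace F] (h₁ : s ≠ m₁) (h₂ : s ≠ m₂) :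
    HasFDerivAt (gradient (itd c m₁ m₂)) (itdHessian c m₁ m₂ s) s := by
  have hunit : ∀ {m : F}, s ≠ m → HasFDerivAt (fun u : F => ‖u - m‖⁻¹ • (u - m))
      (‖s - m‖⁻¹ • (ContinuousLinearMap.id ℝ F -
        (innerSL ℝ (‖s - m‖⁻¹ • (s - m))).smulRight (‖s - m‖⁻¹ • (s - m)))) s :=
    fun h => ((hasFDerivAt_comp_sub _).2
      (hasFDerivAt_norm_inv_smul_self (sub_ne_zero.2 h))).congr_fderiv (by simp)
  refine (((hunit h₁).sub (hunit h₂)).const_smul (1 / c)).congr_of_eventuallyEq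
    (gradient_itd_eventuallyEq h₁ h₂) |>.congr_fderiv ?_
  simp only [itdHessian, smul_sub, smul_smul, one_div, mul_inv]

theorem norm_itdHessian_le (hc : 0 < c) {R : ℝ} (hR : 0 < R) (hR₁ : R ≤ ‖s - m₁‖)
    (hR₂ : R ≤ ‖s - m₂‖) :
    ‖itdHessian c m₁ m₂ s‖ ≤ 2 / (c * R) := by
  have hunit : ∀ {m : F}, R ≤ ‖s - m‖ → ‖‖s - m‖⁻¹ • (s - m)‖ = 1 := fun h =>
    norm_smul_inv_norm (norm_pos_iff.1 (hR.trans_le h))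
  have hcoef : ∀ r : ℝ, R ≤ r → |1 / (c * r)| ≤ 1 / (c * R) := fun r h => by
    have hr : 0 < r := hR.trans_le h
    rw [abs_of_pos (by positivity)]
    gcongr
  calc ‖itdHessian c m₁ m₂ s‖
      ≤ |1 / (c * ‖s - m₁‖)| + |1 / (c * ‖s - m₂‖)| :=
        (norm_sub_le _ _).trans (add_le_add (norm_smul_id_sub_innerSL_smulRight_le (hunit hR₁) _)
          (norm_smul_id_sub_innerSL_smulRight_le (hunit hR₂) _))
    _ ≤ 1 / (c * R) + 1 / (c * R) := add_le_add (hcoef _ hR₁) (hcoef _ hR₂)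
    _ = 2 / (c * R) := by ring

end

/-- **part of Theorem 3 of the paper.** For `𝒢(s) = (1/c)(‖s−m₁‖ − ‖s−m₂‖)`
with `c > 0`, `𝒢` is twice differentiable at every `s ∉ {m₁, m₂}` with Hessian
`𝒢″(s) = (1/(c‖s−m₁‖))(I − e₁e₁ᵀ) − (1/(c‖s−m₂‖))(I − e₂e₂ᵀ)`, `eᵢ = (s−mᵢ)/‖s−mᵢ‖`,
and `‖𝒢″(s)‖ ≤ 3/(cR)` whenever `min{‖s−m₁‖, ‖s−m₂‖} ≥ R > 0`. -/
theorem ITD_hessian {c : ℝ} (hc : 0 < c) (m₁ m₂ : EuclideanSpace ℝ (Fin 3))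
    (G : EuclideanSpace ℝ (Fin 3) → ℝ)
    (hG : G = fun s => (1 / c) * (‖s - m₁‖ - ‖s - m₂‖)) :
    ∀ s, s ≠ m₁ → s ≠ m₂ →
      DifferentiableAt ℝ G s ∧
      DifferentiableAt ℝ (fun u => gradient G u) s ∧
      (fderiv ℝ (fun u => gradient G u) s =
        (1 / (c * ‖s - m₁‖)) •
            (ContinuousLinearMap.id ℝ (EuclideanSpace ℝ (Fin 3)) -
              (innerSL ℝ (‖s - m₁‖⁻¹ • (s - m₁))).smulRight (‖s - m₁‖⁻¹ • (s - m₁))) -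
          (1 / (c * ‖s - m₂‖)) •
            (ContinuousLinearMap.id ℝ (EuclideanSpace ℝ (Fin 3)) -
              (innerSL ℝ (‖s - m₂‖⁻¹ • (s - m₂))).smulRight (‖s - m₂‖⁻¹ • (s - m₂)))) ∧
      ∀ R : ℝ, 0 < R → R ≤ ‖s - m₁‖ → R ≤ ‖s - m₂‖ →
        ‖fderiv ℝ (fun u => gradient G u) s‖ ≤ 3 / (c * R) := by
  intro s h₁ h₂
  obtain rfl : G = itd c m₁ m₂ := hG
  have hessian := hasFDerivAt_gradient_itd (c := c) h₁ h₂
  refine ⟨(hasGradientAt_itd h₁ h₂).differentiableAt, hessian.differentiableAt, hessian.fderiv,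
    fun R hR hR₁ hR₂ => ?_⟩
  calc ‖fderiv ℝ (gradient (itd c m₁ m₂)) s‖ = ‖itdHessian c m₁ m₂ s‖ := by rw [hessian.fderiv]
    _ ≤ 2 / (c * R) := norm_itdHessian_le hc hR hR₁ hR₂
    _ ≤ 3 / (c * R) := by gcongr; norm_num
end
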